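/- There exists a minimum-width constrained two-strip (σ₁,σ₂) enclosing P (orientations differing by β) such that either (i) the widths differ and one of the four bounding lines contains two points of P, or (ii) the two strips have equal width and each of the four bounding lines contains a point of P. -/
import Mathlib


open Set

noncomputable section

/-- Signed coordinate of a point in the direction of the unit normal of orientation `θ`. -/
def oproj (θ : ℝ) (p : ℝ × ℝ) : ℝ := -Real.sin θ * p.1 + Real.cos θ * p.2

/-- Tangential coordinate of a point for orientation `θ`. -/
def otang (θ : ℝ) (p : ℝ × ℝ) : ℝ := Real.cos θ * p.1 + Real.sin θ * p.2

/-- Width of the minimum-width strip in orientation `θ` enclosing `S`. -/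
def widthAt (θ : ℝ) (S : Set (ℝ × ℝ)) : ℝ := sSup (oproj θ '' S) - sInf (oproj θ '' S)

/-- The minimum-width strip in orientation `θ` enclosing `S`. -/
def stripAt (θ : ℝ) (S : Set (ℝ × ℝ)) : Set (ℝ × ℝ) :=
  {q | sInf (oproj θ '' S) ≤ oproj θ q ∧ oproj θ q ≤ sSup (oproj θ '' S)}

/-- Width of a planar set: minimum over all orientations of the enclosing strip width. -/
def widthSet (S : Set (ℝ × ℝ)) : ℝ := sInf ((fun θ => widthAt θ S) '' Set.Ico 0 Real.pi)

/-- Orientation-constrained width over the interval `[θ₁, θ₂]`. -/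
def widthIn (θ₁ θ₂ : ℝ) (S : Set (ℝ × ℝ)) : ℝ :=
  sInf ((fun θ => widthAt θ S) '' Set.Icc θ₁ θ₂)

/-- Intersection of the minimal strips over all orientations in `[θ₁, θ₂]`. -/
def stripIn (θ₁ θ₂ : ℝ) (S : Set (ℝ × ℝ)) : Set (ℝ × ℝ) :=
  ⋂ θ ∈ Set.Icc θ₁ θ₂, stripAt θ S

/-- Euclidean distance in the plane. -/
def dist2 (p q : ℝ × ℝ) : ℝ := Real.sqrt ((p.1 - q.1) ^ 2 + (p.2 - q.2) ^ 2)

/-- Euclidean distance between two planar sets. -/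
def setDist2 (A B : Set (ℝ × ℝ)) : ℝ := sInf {d | ∃ a ∈ A, ∃ b ∈ B, d = dist2 a b}

/-- Membership in the strip of orientation `θ` with normal coordinates in `[a,b]`. -/
def inStrip (θ a b : ℝ) (q : ℝ × ℝ) : Prop := a ≤ oproj θ q ∧ oproj θ q ≤ b

/-- `P` can be covered by two strips of width at most `w` whose orientations differ by `β`. -/
def TwoStripCover (β w : ℝ) (P : Set (ℝ × ℝ)) : Prop :=
  ∃ θ a₁ b₁ a₂ b₂ : ℝ, b₁ - a₁ ≤ w ∧ b₂ - a₂ ≤ w ∧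
    ∀ q ∈ P, inStrip θ a₁ b₁ q ∨ inStrip (θ + β) a₂ b₂ q

open Filter Topology

lemma oproj_shift (φ ε : ℝ) (r : ℝ × ℝ) :
    oproj (φ + ε) r = Real.cos ε * oproj φ r - Real.sin ε * otang φ r := by
  simp only [oproj, otang, Real.sin_add, Real.cos_add]; ring

lemma cont_oproj (φ : ℝ) (r : ℝ × ℝ) : Continuous fun ε => oproj (φ + ε) r := by
  unfold oproj; fun_prop

lemma aux_base {φ : ℝ} {u v : ℝ × ℝ} (h : oproj φ u < oproj φ v) :
    ∀ᶠ ε in 𝓝 (0:ℝ), oproj (φ + ε) u < oproj (φ + ε) v := by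
  have := ((cont_oproj φ u).continuousAt (x := 0)).eventually_lt
    ((cont_oproj φ v).continuousAt) (by simpa using h)
  simpa using this

lemma aux_base_const_lt {φ : ℝ} {u : ℝ × ℝ} {C : ℝ} (h : oproj φ u < C) :
    ∀ᶠ ε in 𝓝 (0:ℝ), oproj (φ + ε) u < C := by
  have := ((cont_oproj φ u).continuousAt (x := 0)).eventually_lt
    (continuousAt_const (y := C)) (by simpa using h)
  simpa using this

lemma aux_base_lt_const {φ : ℝ} {u : ℝ × ℝ} {C : ℝ} (h : C < oproj φ u) :
    ∀ᶠ ε in 𝓝 (0:ℝ), C < oproj (φ + ε) u := by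
  have := (continuousAt_const (y := C)).eventually_lt
    ((cont_oproj φ u).continuousAt (x := 0)) (by simpa using h)
  simpa using this

lemma exists_eps (c g δ : ℝ) (hc : 0 < c) (hδ : 0 < δ) :
    ∃ ε : ℝ, |ε| < δ ∧ Real.cos ε * c - Real.sin ε * g < c := by
  set ε₀ : ℝ := min δ 1 / 2 with hε₀
  have h0 : 0 < ε₀ := by positivity
  have hlt : ε₀ < δ := by
    have : min δ 1 ≤ δ := min_le_left _ _
    linarith
  have hcos : Real.cos ε₀ < 1 := by
    have := Real.cos_lt_cos_of_nonneg_of_le_pi (le_refl 0) ?_ h0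
    · simpa using this
    · have : min δ 1 ≤ 1 := min_le_right _ _
      nlinarith [Real.pi_gt_three]
  have hsin : 0 < Real.sin ε₀ := by
    apply Real.sin_pos_of_pos_of_lt_pi h0
    have : min δ 1 ≤ 1 := min_le_right _ _
    nlinarith [Real.pi_gt_three]
  refine ⟨if 0 ≤ g then ε₀ else -ε₀, ?_, ?_⟩
  · split
    · rw [abs_of_pos h0]; exact hlt
    · rw [abs_neg, abs_of_pos h0]; exact hlt
  · split <;> rename_i hg
    · nlinarith
    · push_neg at hg
      rw [Real.cos_neg, Real.sin_neg]
      nlinarith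

lemma perturb_main (θw θn wstar : ℝ) (Gw Gn : Finset (ℝ × ℝ)) (p q : ℝ × ℝ)
    (hp : p ∈ Gw) (hq : q ∈ Gw)
    (hpuniq : ∀ r ∈ Gw, r ≠ p → oproj θw r < oproj θw p)
    (hquniq : ∀ r ∈ Gw, r ≠ q → oproj θw q < oproj θw r)
    (hwide : oproj θw p - oproj θw q = wstar) (hws : 0 < wstar)
    (An Bn : ℝ) (hn : ∀ r ∈ Gn, An ≤ oproj θn r ∧ oproj θn r ≤ Bn)
    (hnarrow : Bn - An < wstar) :
    ∃ ε a b a' b', b - a < wstar ∧ b' - a' < wstar ∧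
      (∀ r ∈ Gw, a ≤ oproj (θw + ε) r ∧ oproj (θw + ε) r ≤ b) ∧
      (∀ r ∈ Gn, a' ≤ oproj (θn + ε) r ∧ oproj (θn + ε) r ≤ b') := by
  have hpq : p ≠ q := by
    intro h; rw [h] at hwide; simp at hwide; linarith
  have hqp : oproj θw q < oproj θw p := by linarith [hpuniq q hq hpq.symm]
  set η : ℝ := (wstar - (Bn - An)) / 3 with hη
  have hηpos : 0 < η := by simp only [hη]; linarith
  have E1 : ∀ᶠ ε in 𝓝 (0:ℝ), ∀ r ∈ Gw,
      oproj (θw + ε) q ≤ oproj (θw + ε) r ∧ oproj (θw + ε) r ≤ oproj (θw + ε) p := by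
    rw [eventually_all_finset]
    intro r hr
    rcases eq_or_ne r p with rfl | hrp
    · exact (aux_base hqp).mono fun ε h => ⟨h.le, le_refl _⟩
    rcases eq_or_ne r q with rfl | hrq
    · exact (aux_base (hpuniq _ hq hrp)).mono fun ε h => ⟨le_refl _, h.le⟩
    · exact ((aux_base (hquniq r hr hrq)).and (aux_base (hpuniq r hr hrp))).mono
        fun ε h => ⟨h.1.le, h.2.le⟩
  have E2 : ∀ᶠ ε in 𝓝 (0:ℝ), ∀ r ∈ Gn,
      An - η ≤ oproj (θn + ε) r ∧ oproj (θn + ε) r ≤ Bn + η := by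
    rw [eventually_all_finset]
    intro r hr
    have h1 : An - η < oproj θn r := by linarith [(hn r hr).1]
    have h2 : oproj θn r < Bn + η := by linarith [(hn r hr).2]
    exact ((aux_base_lt_const h1).and (aux_base_const_lt h2)).mono
      fun ε h => ⟨h.1.le, h.2.le⟩
  have E := E1.and E2
  rw [Metric.eventually_nhds_iff] at E
  obtain ⟨δ, hδ, hE⟩ := E
  obtain ⟨ε, hεδ, hεlt⟩ := exists_eps wstar (otang θw p - otang θw q) δ hws hδ
  have hdist : dist ε (0:ℝ) < δ := by simpa [Real.dist_eq] using hεδ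
  obtain ⟨hE1, hE2⟩ := hE hdist
  refine ⟨ε, oproj (θw + ε) q, oproj (θw + ε) p, An - η, Bn + η, ?_, ?_, hE1, hE2⟩
  · rw [oproj_shift, oproj_shift]
    calc Real.cos ε * oproj θw p - Real.sin ε * otang θw p -
        (Real.cos ε * oproj θw q - Real.sin ε * otang θw q)
        = Real.cos ε * wstar - Real.sin ε * (otang θw p - otang θw q) := by
          rw [← hwide]; ring
      _ < wstar := hεlt
  · simp only [hη]; linarith

lemma core (P : Set (ℝ × ℝ)) (β wstar θ : ℝ)
    (hmin : ∀ w, TwoStripCover β w P → wstar ≤ w)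
    (G₁ G₂ : Finset (ℝ × ℝ)) (hG₁ne : G₁.Nonempty) (hG₂ne : G₂.Nonempty)
    (hG₁P : ∀ r ∈ G₁, r ∈ P) (hG₂P : ∀ r ∈ G₂, r ∈ P)
    (hsplit : ∀ x ∈ P, x ∈ G₁ ∨ x ∈ G₂)
    (c₁ d₁ : ℝ) (hcd₁ : d₁ - c₁ ≤ wstar)
    (hb₁ : ∀ r ∈ G₁, c₁ ≤ oproj θ r ∧ oproj θ r ≤ d₁)
    (c₂ d₂ : ℝ) (hcd₂ : d₂ - c₂ ≤ wstar)
    (hb₂ : ∀ r ∈ G₂, c₂ ≤ oproj (θ + β) r ∧ oproj (θ + β) r ≤ d₂) :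
    ∃ θ' a₁ b₁ a₂ b₂ : ℝ,
      (∀ q ∈ P, inStrip θ' a₁ b₁ q ∨ inStrip (θ' + β) a₂ b₂ q) ∧
      max (b₁ - a₁) (b₂ - a₂) = wstar ∧
      ((b₁ - a₁ ≠ b₂ - a₂ ∧
        ∃ q₁ ∈ P, ∃ q₂ ∈ P, q₁ ≠ q₂ ∧
          ((oproj θ' q₁ = a₁ ∧ oproj θ' q₂ = a₁) ∨
           (oproj θ' q₁ = b₁ ∧ oproj θ' q₂ = b₁) ∨
           (oproj (θ' + β) q₁ = a₂ ∧ oproj (θ' + β) q₂ = a₂) ∨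
           (oproj (θ' + β) q₁ = b₂ ∧ oproj (θ' + β) q₂ = b₂))) ∨
       (b₁ - a₁ = wstar ∧ b₂ - a₂ = wstar ∧
        (∃ q ∈ P, oproj θ' q = a₁) ∧ (∃ q ∈ P, oproj θ' q = b₁) ∧
        (∃ q ∈ P, oproj (θ' + β) q = a₂) ∧ (∃ q ∈ P, oproj (θ' + β) q = b₂))) := by
  classical
  set A₁ := G₁.inf' hG₁ne (oproj θ) with hA₁
  set B₁ := G₁.sup' hG₁ne (oproj θ) with hB₁
  set A₂ := G₂.inf' hG₂ne (oproj (θ + β)) with hA₂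
  set B₂ := G₂.sup' hG₂ne (oproj (θ + β)) with hB₂
  obtain ⟨p₁, hp₁G, hp₁e⟩ := G₁.exists_mem_eq_sup' hG₁ne (oproj θ)
  obtain ⟨m₁, hm₁G, hm₁e⟩ := G₁.exists_mem_eq_inf' hG₁ne (oproj θ)
  obtain ⟨p₂, hp₂G, hp₂e⟩ := G₂.exists_mem_eq_sup' hG₂ne (oproj (θ + β))
  obtain ⟨m₂, hm₂G, hm₂e⟩ := G₂.exists_mem_eq_inf' hG₂ne (oproj (θ + β))
  have hp₁ : oproj θ p₁ = B₁ := by rw [hB₁, hp₁e]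
  have hm₁ : oproj θ m₁ = A₁ := by rw [hA₁, hm₁e]
  have hp₂ : oproj (θ + β) p₂ = B₂ := by rw [hB₂, hp₂e]
  have hm₂ : oproj (θ + β) m₂ = A₂ := by rw [hA₂, hm₂e]
  have hA₁le : ∀ r ∈ G₁, A₁ ≤ oproj θ r := fun r hr => Finset.inf'_le _ hr
  have hleB₁ : ∀ r ∈ G₁, oproj θ r ≤ B₁ := fun r hr => Finset.le_sup' _ hr
  have hA₂le : ∀ r ∈ G₂, A₂ ≤ oproj (θ + β) r := fun r hr => Finset.inf'_le _ hr
  have hleB₂ : ∀ r ∈ G₂, oproj (θ + β) r ≤ B₂ := fun r hr => Finset.le_sup' _ hr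
  have hw₁ : B₁ - A₁ ≤ wstar := by
    have h1 : B₁ ≤ d₁ := Finset.sup'_le _ _ fun r hr => (hb₁ r hr).2
    have h2 : c₁ ≤ A₁ := Finset.le_inf' _ _ fun r hr => (hb₁ r hr).1
    linarith
  have hw₂ : B₂ - A₂ ≤ wstar := by
    have h1 : B₂ ≤ d₂ := Finset.sup'_le _ _ fun r hr => (hb₂ r hr).2
    have h2 : c₂ ≤ A₂ := Finset.le_inf' _ _ fun r hr => (hb₂ r hr).1
    linarith
  have hw₁0 : 0 ≤ B₁ - A₁ := by
    have := hA₁le p₁ hp₁G; rw [hp₁] at this; linarith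
  have hw₂0 : 0 ≤ B₂ - A₂ := by
    have := hA₂le p₂ hp₂G; rw [hp₂] at this; linarith
  have covergoal : ∀ x ∈ P, inStrip θ A₁ B₁ x ∨ inStrip (θ + β) A₂ B₂ x :=
    fun x hx => (hsplit x hx).imp (fun h => ⟨hA₁le x h, hleB₁ x h⟩)
      (fun h => ⟨hA₂le x h, hleB₂ x h⟩)
  have hmaxw : max (B₁ - A₁) (B₂ - A₂) = wstar := by
    refine le_antisymm (max_le hw₁ hw₂) (hmin _ ?_)
    exact ⟨θ, A₁, B₁, A₂, B₂, le_max_left _ _, le_max_right _ _, covergoal⟩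
  rcases eq_or_ne (B₁ - A₁) (B₂ - A₂) with heq | hne2
  · have h1 : B₁ - A₁ = wstar := by rw [← hmaxw, heq, max_self]
    have h2 : B₂ - A₂ = wstar := by rw [← heq]; exact h1
    exact ⟨θ, A₁, B₁, A₂, B₂, covergoal, hmaxw, Or.inr ⟨h1, h2,
      ⟨m₁, hG₁P _ hm₁G, hm₁⟩, ⟨p₁, hG₁P _ hp₁G, hp₁⟩,
      ⟨m₂, hG₂P _ hm₂G, hm₂⟩, ⟨p₂, hG₂P _ hp₂G, hp₂⟩⟩⟩
  rcases hne2.lt_or_gt with hlt | hlt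
  · -- strip 2 is wide
    have h2eq : B₂ - A₂ = wstar := by rw [← hmaxw]; exact (max_eq_right hlt.le).symm
    have h1lt : B₁ - A₁ < wstar := lt_of_lt_of_le hlt hw₂
    have hwspos : 0 < wstar := lt_of_le_of_lt hw₁0 h1lt
    refine ⟨θ, A₁, B₁, A₂, B₂, covergoal, hmaxw, Or.inl ⟨hne2, ?_⟩⟩
    by_contra hno
    push_neg at hno
    have hpuniq : ∀ r ∈ G₂, r ≠ p₂ → oproj (θ + β) r < oproj (θ + β) p₂ := by
      intro r hr hrp
      rcases lt_or_eq_of_le (hleB₂ r hr) with h | h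
      · rwa [← hp₂] at h
      · exact absurd hp₂ ((hno r (hG₂P r hr) p₂ (hG₂P p₂ hp₂G) hrp).2.2.2 h)
    have hquniq : ∀ r ∈ G₂, r ≠ m₂ → oproj (θ + β) m₂ < oproj (θ + β) r := by
      intro r hr hrm
      rcases lt_or_eq_of_le (hA₂le r hr) with h | h
      · rwa [← hm₂] at h
      · exact absurd hm₂ ((hno r (hG₂P r hr) m₂ (hG₂P m₂ hm₂G) hrm).2.2.1 h.symm)
    obtain ⟨ε, a, b, a', b', hba, hb'a', hWw, hWn⟩ :=
      perturb_main (θ + β) θ wstar G₂ G₁ p₂ m₂ hp₂G hm₂G hpuniq hquniq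
        (by rw [hp₂, hm₂]; exact h2eq) hwspos A₁ B₁
        (fun r hr => ⟨hA₁le r hr, hleB₁ r hr⟩) h1lt
    have hcov2 : TwoStripCover β (max (b' - a') (b - a)) P := by
      refine ⟨θ + ε, a', b', a, b, le_max_left _ _, le_max_right _ _, fun x hx => ?_⟩
      refine (hsplit x hx).imp (fun h => hWn x h) (fun h => ?_)
      have hx2 := hWw x h
      rw [show θ + ε + β = θ + β + ε from by ring]
      exact hx2
    exact absurd (hmin _ hcov2) (not_le.2 (max_lt hb'a' hba))
  · -- strip 1 is wide
    have h1eq : B₁ - A₁ = wstar := by rw [← hmaxw]; exact (max_eq_left hlt.le).symm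
    have h2lt : B₂ - A₂ < wstar := lt_of_lt_of_le hlt hw₁
    have hwspos : 0 < wstar := lt_of_le_of_lt hw₂0 h2lt
    refine ⟨θ, A₁, B₁, A₂, B₂, covergoal, hmaxw, Or.inl ⟨hne2, ?_⟩⟩
    by_contra hno
    push_neg at hno
    have hpuniq : ∀ r ∈ G₁, r ≠ p₁ → oproj θ r < oproj θ p₁ := by
      intro r hr hrp
      rcases lt_or_eq_of_le (hleB₁ r hr) with h | h
      · rwa [← hp₁] at h
      · exact absurd hp₁ ((hno r (hG₁P r hr) p₁ (hG₁P p₁ hp₁G) hrp).2.1 h)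
    have hquniq : ∀ r ∈ G₁, r ≠ m₁ → oproj θ m₁ < oproj θ r := by
      intro r hr hrm
      rcases lt_or_eq_of_le (hA₁le r hr) with h | h
      · rwa [← hm₁] at h
      · exact absurd hm₁ ((hno r (hG₁P r hr) m₁ (hG₁P m₁ hm₁G) hrm).1 h.symm)
    obtain ⟨ε, a, b, a', b', hba, hb'a', hWw, hWn⟩ :=
      perturb_main θ (θ + β) wstar G₁ G₂ p₁ m₁ hp₁G hm₁G hpuniq hquniq
        (by rw [hp₁, hm₁]; exact h1eq) hwspos A₂ B₂
        (fun r hr => ⟨hA₂le r hr, hleB₂ r hr⟩) h2lt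
    have hcov2 : TwoStripCover β (max (b - a) (b' - a')) P := by
      refine ⟨θ + ε, a, b, a', b', le_max_left _ _, le_max_right _ _, fun x hx => ?_⟩
      refine (hsplit x hx).imp (fun h => hWw x h) (fun h => ?_)
      have hx2 := hWn x h
      rw [show θ + ε + β = θ + β + ε from by ring]
      exact hx2
    exact absurd (hmin _ hcov2) (not_le.2 (max_lt hba hb'a'))

/-- there is a minimum-width constrained two-strip enclosing `P` such that
either (i) the widths differ and one of the four bounding lines contains two points of `P`,
or (ii) the strips have equal width `w*` and each bounding line contains a point of `P`. -/
theorem stmt11 (P : Set (ℝ × ℝ)) (hP : P.Finite) (hne : P.Nonempty)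
    (hgen : ∀ s ⊆ P, s.ncard = 3 → ¬ Collinear ℝ s)
    (β : ℝ) (hβ : β ∈ Set.Icc 0 (Real.pi / 2))
    (wstar : ℝ) (hcov : TwoStripCover β wstar P)
    (hmin : ∀ w, TwoStripCover β w P → wstar ≤ w) :
    ∃ θ a₁ b₁ a₂ b₂ : ℝ,
      (∀ q ∈ P, inStrip θ a₁ b₁ q ∨ inStrip (θ + β) a₂ b₂ q) ∧
      max (b₁ - a₁) (b₂ - a₂) = wstar ∧
      ((b₁ - a₁ ≠ b₂ - a₂ ∧
        ∃ q₁ ∈ P, ∃ q₂ ∈ P, q₁ ≠ q₂ ∧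
          ((oproj θ q₁ = a₁ ∧ oproj θ q₂ = a₁) ∨
           (oproj θ q₁ = b₁ ∧ oproj θ q₂ = b₁) ∨
           (oproj (θ + β) q₁ = a₂ ∧ oproj (θ + β) q₂ = a₂) ∨
           (oproj (θ + β) q₁ = b₂ ∧ oproj (θ + β) q₂ = b₂))) ∨
       (b₁ - a₁ = wstar ∧ b₂ - a₂ = wstar ∧
        (∃ q ∈ P, oproj θ q = a₁) ∧ (∃ q ∈ P, oproj θ q = b₁) ∧
        (∃ q ∈ P, oproj (θ + β) q = a₂) ∧ (∃ q ∈ P, oproj (θ + β) q = b₂))) := by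
  classical
  obtain ⟨θ, a₁, b₁, a₂, b₂, h1, h2, hcv⟩ := hcov
  obtain ⟨q₀, hq₀⟩ := hne
  have hws0 : 0 ≤ wstar := by
    rcases hcv q₀ hq₀ with h | h
    · have := h.1.trans h.2
      linarith
    · have := h.1.trans h.2
      linarith
  set F₁ : Finset (ℝ × ℝ) := hP.toFinset.filter (fun r => inStrip θ a₁ b₁ r) with hF₁
  set F₂ : Finset (ℝ × ℝ) := hP.toFinset.filter (fun r => ¬ inStrip θ a₁ b₁ r) with hF₂
  have hmemF₁ : ∀ r ∈ F₁, r ∈ P ∧ inStrip θ a₁ b₁ r := by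
    intro r hr; rw [hF₁, Finset.mem_filter, Set.Finite.mem_toFinset] at hr; exact hr
  have hmemF₂ : ∀ r ∈ F₂, r ∈ P ∧ ¬ inStrip θ a₁ b₁ r := by
    intro r hr; rw [hF₂, Finset.mem_filter, Set.Finite.mem_toFinset] at hr; exact hr
  have hmem2 : ∀ r ∈ F₂, a₂ ≤ oproj (θ + β) r ∧ oproj (θ + β) r ≤ b₂ := by
    intro r hr
    obtain ⟨hrP, hrn⟩ := hmemF₂ r hr
    rcases hcv r hrP with h | h
    · exact absurd h hrn
    · exact h
  have hsplitF : ∀ x ∈ P, x ∈ F₁ ∨ x ∈ F₂ := by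
    intro x hx
    by_cases hs : inStrip θ a₁ b₁ x
    · left; rw [hF₁, Finset.mem_filter, Set.Finite.mem_toFinset]; exact ⟨hx, hs⟩
    · right; rw [hF₂, Finset.mem_filter, Set.Finite.mem_toFinset]; exact ⟨hx, hs⟩
  by_cases hne₁ : F₁.Nonempty
  · by_cases hne₂ : F₂.Nonempty
    · exact core P β wstar θ hmin F₁ F₂ hne₁ hne₂ (fun r hr => (hmemF₁ r hr).1)
        (fun r hr => (hmemF₂ r hr).1) hsplitF a₁ b₁ h1 (fun r hr => (hmemF₁ r hr).2)
        a₂ b₂ h2 hmem2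
    · have hsplit' : ∀ x ∈ P, x ∈ F₁ ∨ x ∈ ({q₀} : Finset (ℝ × ℝ)) := by
        intro x hx
        rcases hsplitF x hx with h | h
        · exact Or.inl h
        · exact absurd ⟨x, h⟩ hne₂
      exact core P β wstar θ hmin F₁ {q₀} hne₁ (Finset.singleton_nonempty _)
        (fun r hr => (hmemF₁ r hr).1)
        (fun r hr => by rw [Finset.mem_singleton] at hr; subst hr; exact hq₀)
        hsplit' a₁ b₁ h1 (fun r hr => (hmemF₁ r hr).2)
        (oproj (θ + β) q₀) (oproj (θ + β) q₀) (by linarith)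
        (fun r hr => by rw [Finset.mem_singleton] at hr; subst hr; exact ⟨le_refl _, le_refl _⟩)
  · have hne₂ : F₂.Nonempty := by
      obtain h | h := hsplitF q₀ hq₀
      · exact absurd ⟨q₀, h⟩ hne₁
      · exact ⟨q₀, h⟩
    have hsplit' : ∀ x ∈ P, x ∈ ({q₀} : Finset (ℝ × ℝ)) ∨ x ∈ F₂ := by
      intro x hx
      rcases hsplitF x hx with h | h
      · exact absurd ⟨x, h⟩ hne₁
      · exact Or.inr h
    exact core P β wstar θ hmin {q₀} F₂ (Finset.singleton_nonempty _) hne₂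
      (fun r hr => by rw [Finset.mem_singleton] at hr; subst hr; exact hq₀)
      (fun r hr => (hmemF₂ r hr).1) hsplit'
      (oproj θ q₀) (oproj θ q₀) (by linarith)
      (fun r hr => by rw [Finset.mem_singleton] at hr; subst hr; exact ⟨le_refl _, le_refl _⟩)
      a₂ b₂ h2 hmem2
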